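/- Let n ≥ 1 and define P : ℝ → ℝ^{4n} → ℝ³ → ℂ by P t x z := ∫_{τ ∈ ℝ³} exp( -( i·⟨τ, z⟩ + (1/2)·‖τ‖·(cosh ‖τ‖ / sinh ‖τ‖)·‖x‖² ) / t ) · ( ‖τ‖ / sinh ‖τ‖ )^{2n} dτ. Let 0 < s < 1, α, β, γ, δ ∈ {1,…,4n} and i, j ∈ {1,2,3}, and assume it is NOT the case that i = j and at least one of the pairings (α = β and γ = δ), (α = γ and β = δ), (α = δ and β = γ) holds. Then ∫_{(x,z) ∈ ℝ^{4n} × ℝ³} P (1-s) x z · x_α · x_β · x_γ · x_δ · (∂_{z_i}∂_{z_j} P) s x z d(x,z) = 0, where ∂_{z_i}∂_{z_j}P s x z denotes the second-order partial derivative of the map z ↦ P s x z in the i-th and j-th coordinate directions, x_α is the α-th coordinate of x, and the integral is over ℝ^{4n} × ℝ³ with Lebesgue measure. -/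

import Mathlib

/-!
The kernel `P t x z` depends on `x` only through `‖x‖` and is invariant under orthogonal maps
in `z`. If `i = j` and the indices do not pair up, some horizontal coordinate `x_k` occurs an odd
number of times in `x_α x_β x_γ x_δ`, so reflecting `x_k` negates the integrand. If `i ≠ j`,
reflecting `z_i` fixes `P` and the direction `e_j` but reverses `e_i`, so it negates
`∂_{z_i}∂_{z_j} P`. Either way a measure-preserving involution negates the integrand, so the
integral vanishes.
-/

open RealInnerProductSpace MeasureTheory

/-- The Beals–Gaveau–Greiner heat kernel (unnormalized) of the intrinsic sublaplacian on
the quaternionic Heisenberg group. -/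
noncomputable def bggKernel (n : ℕ) (t : ℝ) (x : EuclideanSpace ℝ (Fin (4 * n)))
    (z : EuclideanSpace ℝ (Fin 3)) : ℂ :=
  ∫ τ : EuclideanSpace ℝ (Fin 3),
    Complex.exp (-((Complex.I * ((⟪τ, z⟫ : ℝ) : ℂ) +
        (((1 / 2 : ℝ) * ‖τ‖ * (Real.cosh ‖τ‖ / Real.sinh ‖τ‖) * ‖x‖ ^ 2 : ℝ) : ℂ)) /
        (t : ℂ))) *
      (((‖τ‖ / Real.sinh ‖τ‖ : ℝ) : ℂ)) ^ (2 * n)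

section

variable {E F G : Type*} [NormedAddCommGroup E] [InnerProductSpace ℝ E] [FiniteDimensional ℝ E]
  [MeasurableSpace E] [BorelSpace E] [NormedAddCommGroup F] [InnerProductSpace ℝ F]
  [FiniteDimensional ℝ F] [MeasurableSpace F] [BorelSpace F]
  [NormedAddCommGroup G] [NormedSpace ℝ G]

theorem integral_prod_eq_zero_of_map_eq_neg (e₁ : E ≃ₗᵢ[ℝ] E) (e₂ : F ≃ₗᵢ[ℝ] F)
    {f : E × F → G} (hf : ∀ x z, f (e₁ x, e₂ z) = -f (x, z)) : ∫ p, f p = 0 := by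
  have he : MeasurePreserving (Prod.map e₁ e₂) volume volume := by
    rw [Measure.volume_eq_prod]
    exact e₁.measurePreserving.prod e₂.measurePreserving
  have hcomp := he.integral_comp
    (e₁.toHomeomorph.measurableEmbedding.prodMap e₂.toHomeomorph.measurableEmbedding) f
  have hodd : ∀ p : E × F, f (Prod.map e₁ e₂ p) = -f p := fun p => hf p.1 p.2
  have : IsAddTorsionFree G := .of_isTorsionFree ℝ G
  rw [integral_congr_ae (.of_forall hodd), integral_neg] at hcomp
  exact neg_eq_self.mp hcomp

end

section

variable {𝕜 E G : Type*} [NontriviallyNormedField 𝕜] [NormedAddCommGroup E] [NormedSpace 𝕜 E]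
  [NormedAddCommGroup G] [NormedSpace 𝕜 G] {F : E → G} (e : E ≃L[𝕜] E)

theorem fderiv_apply_map_of_forall_map_eq (h : ∀ z, F (e z) = F z) (z v : E) :
    fderiv 𝕜 F (e z) (e v) = fderiv 𝕜 F z v := by
  have hF : F ∘ e = F := funext h
  have := e.comp_right_fderiv (f := F) (x := z)
  rw [hF] at this
  exact (congrArg (· v) this).symm

theorem fderiv_fderiv_apply_map_eq_neg (h : ∀ z, F (e z) = F z) {v w : E} (hv : e v = v)
    (hw : e w = -w) (z : E) :
    fderiv 𝕜 (fun z => fderiv 𝕜 F z v) (e z) w = -fderiv 𝕜 (fun z => fderiv 𝕜 F z v) z w := by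
  have hG : ∀ z, fderiv 𝕜 F (e z) v = fderiv 𝕜 F z v := fun z => by
    simpa only [hv] using fderiv_apply_map_of_forall_map_eq e h z v
  have := fderiv_apply_map_of_forall_map_eq (F := fun z => fderiv 𝕜 F z v) e hG z w
  rw [hw, map_neg] at this
  exact neg_eq_iff_eq_neg.mp this

end

noncomputable def coordReflection {ι : Type*} [Fintype ι] [DecidableEq ι] (k : ι) :
    EuclideanSpace ℝ ι ≃ₗᵢ[ℝ] EuclideanSpace ℝ ι :=
  .piLpCongrRight 2 fun l => if l = k then .neg ℝ else .refl ℝ ℝ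

section

variable {ι : Type*} [Fintype ι] [DecidableEq ι]

theorem coordReflection_apply (k : ι) (x : EuclideanSpace ℝ ι) (l : ι) :
    coordReflection k x l = (if l = k then -1 else 1) * x l := by
  by_cases h : l = k <;> simp [coordReflection, h]

theorem coordReflection_single_self (k : ι) (a : ℝ) :
    coordReflection k (EuclideanSpace.single k a) = -EuclideanSpace.single k a := by
  ext l
  by_cases h : l = k <;> simp [coordReflection_apply, h]

theorem coordReflection_single_of_ne {k j : ι} (h : j ≠ k) (a : ℝ) :
    coordReflection k (EuclideanSpace.single j a) = EuclideanSpace.single j a := by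
  ext l
  by_cases hl : l = k <;> simp [coordReflection_apply, hl, PiLp.single_apply, h.symm]

end

theorem bggKernel_isometry_x (n : ℕ) (t : ℝ)
    (e : EuclideanSpace ℝ (Fin (4 * n)) ≃ₗᵢ[ℝ] EuclideanSpace ℝ (Fin (4 * n))) (x : EuclideanSpace ℝ (Fin (4 * n))) (z : EuclideanSpace ℝ (Fin 3)) :
    bggKernel n t (e x) z = bggKernel n t x z := by
  simp only [bggKernel, e.norm_map]

theorem bggKernel_isometry_z (n : ℕ) (t : ℝ) (x : EuclideanSpace ℝ (Fin (4 * n)))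
    (e : EuclideanSpace ℝ (Fin 3) ≃ₗᵢ[ℝ] EuclideanSpace ℝ (Fin 3)) (z : EuclideanSpace ℝ (Fin 3)) :
    bggKernel n t x (e z) = bggKernel n t x z := by
  unfold bggKernel
  rw [← e.measurePreserving.integral_comp e.toHomeomorph.measurableEmbedding]
  simp only [LinearIsometryEquiv.inner_map_map, LinearIsometryEquiv.norm_map]

theorem exists_sign_prod_eq_neg_one {ι : Type*} [DecidableEq ι] (α β γ δ : ι)
    (h : ¬((α = β ∧ γ = δ) ∨ (α = γ ∧ β = δ) ∨ (α = δ ∧ β = γ))) :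
    ∃ k, (if α = k then (-1 : ℝ) else 1) * (if β = k then -1 else 1) *
      (if γ = k then -1 else 1) * (if δ = k then -1 else 1) = -1 := by
  by_cases hαβ : α = β
  · have hδγ : δ ≠ γ := fun hδγ => h (.inl ⟨hαβ, hδγ.symm⟩)
    by_cases hαγ : α = γ
    · exact ⟨δ, by simp [← hαβ, hαγ, hδγ.symm]⟩
    · exact ⟨γ, by simp [← hαβ, hαγ, hδγ]⟩
  by_cases hαγ : α = γ
  · have hδβ : δ ≠ β := fun hδβ => h (.inr (.inl ⟨hαγ, hδβ.symm⟩))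
    exact ⟨β, by simp [← hαγ, hαβ, hδβ]⟩
  by_cases hαδ : α = δ
  · have hγβ : γ ≠ β := fun hγβ => h (.inr (.inr ⟨hαδ, hγβ.symm⟩))
    exact ⟨β, by simp [← hαδ, hαβ, hγβ]⟩
  exact ⟨α, by simp [Ne.symm hαβ, Ne.symm hαγ, Ne.symm hαδ]⟩

theorem exists_coordReflection_quartic_eq_neg {ι : Type*} [Fintype ι] [DecidableEq ι]
    {α β γ δ : ι} (h : ¬((α = β ∧ γ = δ) ∨ (α = γ ∧ β = δ) ∨ (α = δ ∧ β = γ))) :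
    ∃ k, ∀ x : EuclideanSpace ℝ ι,
      coordReflection k x α * coordReflection k x β * coordReflection k x γ *
        coordReflection k x δ = -(x α * x β * x γ * x δ) := by
  obtain ⟨k, hk⟩ := exists_sign_prod_eq_neg_one α β γ δ h
  refine ⟨k, fun x => ?_⟩
  simp only [coordReflection_apply]
  linear_combination (x α * x β * x γ * x δ) * hk

theorem integral_xxxx_dzdz_bggKernel_eq_zero_general
    (n : ℕ) (s : ℝ)
    (α β γ δ : Fin (4 * n)) (i j : Fin 3)
    (hpair : ¬(i = j ∧
      ((α = β ∧ γ = δ) ∨ (α = γ ∧ β = δ) ∨ (α = δ ∧ β = γ)))) :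
    ∫ p : EuclideanSpace ℝ (Fin (4 * n)) × EuclideanSpace ℝ (Fin 3),
      bggKernel n (1 - s) p.1 p.2 * (p.1 α : ℂ) * (p.1 β : ℂ) * (p.1 γ : ℂ) *
          (p.1 δ : ℂ) *
        fderiv ℝ (fun z => fderiv ℝ (fun z' => bggKernel n s p.1 z') z
            (EuclideanSpace.single j 1)) p.2 (EuclideanSpace.single i 1)
      = 0 := by
  by_cases hij : i = j
  · obtain ⟨k, hk⟩ := exists_coordReflection_quartic_eq_neg fun h => hpair ⟨hij, h⟩
    refine integral_prod_eq_zero_of_map_eq_neg (coordReflection k) (.refl ℝ _) fun x z => ?_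
    have hx := congrArg ((↑) : ℝ → ℂ) (hk x)
    push_cast at hx
    simp only [LinearIsometryEquiv.coe_refl, id, bggKernel_isometry_x]
    generalize bggKernel n (1 - s) x z = K
    generalize (fderiv ℝ _ z (EuclideanSpace.single i 1) : ℂ) = D
    linear_combination K * D * hx
  · refine integral_prod_eq_zero_of_map_eq_neg (.refl ℝ _) (coordReflection i) fun x z => ?_
    simp only [LinearIsometryEquiv.coe_refl, id, bggKernel_isometry_z]
    have hD := fderiv_fderiv_apply_map_eq_neg (coordReflection i).toContinuousLinearEquiv
      (bggKernel_isometry_z n s x _) (coordReflection_single_of_ne (Ne.symm hij) 1)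
      (coordReflection_single_self i 1) z
    rw [LinearIsometryEquiv.coe_toContinuousLinearEquiv] at hD
    rw [hD]
    ring

/-- Formula (4) in the proof of Theorem 5.7: unless `i = j` and the horizontal indices
`α, β, γ, δ` pair up, the fourth-moment integral
`∫ P(1-s, x, z) · x_α x_β x_γ x_δ · ∂_{z_i}∂_{z_j} P(s, x, z) d(x, z)` vanishes. -/
theorem integral_xxxx_dzdz_bggKernel_eq_zero
    (n : ℕ) (hn : 1 ≤ n) (s : ℝ) (hs0 : 0 < s) (hs1 : s < 1)
    (α β γ δ : Fin (4 * n)) (i j : Fin 3)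
    (hpair : ¬(i = j ∧
      ((α = β ∧ γ = δ) ∨ (α = γ ∧ β = δ) ∨ (α = δ ∧ β = γ)))) :
    ∫ p : EuclideanSpace ℝ (Fin (4 * n)) × EuclideanSpace ℝ (Fin 3),
      bggKernel n (1 - s) p.1 p.2 * (p.1 α : ℂ) * (p.1 β : ℂ) * (p.1 γ : ℂ) *
          (p.1 δ : ℂ) *
        fderiv ℝ (fun z => fderiv ℝ (fun z' => bggKernel n s p.1 z') z
            (EuclideanSpace.single j 1)) p.2 (EuclideanSpace.single i 1)
      = 0 :=
  integral_xxxx_dzdz_bggKernel_eq_zero_general n s α β γ δ i j hpair
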